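/- arXiv:0704.0565 — 4 statements merged into one kernel-verified Lean document; each statement's English description precedes it below -/
import Mathlib

section
/- Let δ > 0, α > 0, r > 0 and ū ∈ ℝ, and set ρ := δ^α r and v := (1/(1+δ^α r))·(ū − 1/r). Define u : ℝ³ \ {0} → ℝ by u(x) = ū + (δ^α r/(1+δ^α r))·(1 − ū r)·δ^α/‖x‖. Then: (i) u is harmonic on ℝ³ \ {0}; (ii) u(x) = 1/r + v for every x with ‖x‖ = ρ; (iii) the outward normal derivative ⟪∇u(x), x/‖x‖⟫ equals v for every x with ‖x‖ = ρ; (iv) u(x) → ū as ‖x‖ → ∞. (This is the explicit solution of the single-particle exterior problem in the reaction-controlled scaling.) -/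
open MeasureTheory Filter

local notation "E" => EuclideanSpace ℝ (Fin 3)

/-- The Laplacian of `u : ℝ³ → ℝ` at `x`: the sum of the second directional
derivatives along the standard orthonormal basis directions. -/
noncomputable def laplacian (u : E → ℝ) (x : E) : ℝ :=
  ∑ i : Fin 3,
    fderiv ℝ (fun y => fderiv ℝ u y (EuclideanSpace.single i 1)) x (EuclideanSpace.single i 1)

/-- `u` is harmonic on `s`: it is twice continuously differentiable there and its
Laplacian vanishes on `s`. -/
def IsHarmonicOn (u : E → ℝ) (s : Set E) : Prop :=
  ContDiffOn ℝ 2 u s ∧ ∀ x ∈ s, laplacian u x = 0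

/-! The function is `ū + A / ‖x‖` for a constant `A`, and `1 / ‖x‖` is the Newtonian
potential of `ℝ³`: its gradient is `-x / ‖x‖³`, whose divergence `3 / ‖x‖³ - 3 ‖x‖² / ‖x‖⁵`
vanishes. On the sphere `‖x‖ = ρ` the boundary value and the normal derivative `-A / ρ²` are
then rational identities in `δ ^ α`, `r` and `ū`, and `A / ‖x‖ → 0` at infinity. -/

section InnerProductSpace

variable {F : Type*} [NormedAddCommGroup F] [InnerProductSpace ℝ F] {x : F}

theorem hasFDerivAt_norm_of_ne_zero (hx : x ≠ 0) :
    HasFDerivAt (‖·‖) (‖x‖⁻¹ • innerSL ℝ x) x := by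
  have h := (hasStrictFDerivAt_norm_sq x).hasFDerivAt.sqrt (by positivity)
  simp only [Real.sqrt_sq (norm_nonneg _)] at h
  refine h.congr_fderiv ?_
  ext y
  simp only [one_div, mul_inv_rev, smul_apply, coe_innerSL_apply, nsmul_eq_mul, Nat.cast_ofNat,
    smul_eq_mul]
  field_simp

theorem hasFDerivAt_inv_norm_pow (n : ℕ) (hx : x ≠ 0) :
    HasFDerivAt (fun y : F => (‖y‖ ^ n)⁻¹)
      ((-n * (‖x‖ ^ (n + 2))⁻¹) • innerSL ℝ x) x := by
  have hn : ‖x‖ ≠ 0 := norm_ne_zero_iff.2 hx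
  have h := (hasDerivAt_inv (pow_ne_zero n hn)).comp_hasFDerivAt x
    ((hasDerivAt_pow n ‖x‖).comp_hasFDerivAt x (hasFDerivAt_norm_of_ne_zero hx))
  refine h.congr_fderiv ?_
  rw [smul_smul, smul_smul]
  congr 1
  rcases n with _ | n
  · simp
  · rw [Nat.add_sub_cancel]
    field_simp
    ring

theorem hasGradientAt_const_add_mul_inv_norm [CompleteSpace F] (c a : ℝ) (hx : x ≠ 0) :
    HasGradientAt (fun y : F => c + a * ‖y‖⁻¹) ((-a) • (‖x‖ ^ 3)⁻¹ • x) x := by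
  have h := ((hasFDerivAt_inv_norm_pow 1 hx).const_mul a).const_add c
  simp only [pow_one] at h
  rw [hasGradientAt_iff_hasFDerivAt]
  refine h.congr_fderiv ?_
  ext y
  simp

theorem hasFDerivAt_inv_norm_cube_smul (hx : x ≠ 0) :
    HasFDerivAt (fun y : F => (‖y‖ ^ 3)⁻¹ • y)
      ((‖x‖ ^ 3)⁻¹ • ContinuousLinearMap.id ℝ F
        - (3 * (‖x‖ ^ 5)⁻¹) • (innerSL ℝ x).smulRight x) x := by
  refine ((hasFDerivAt_inv_norm_pow 3 hx).smul (hasFDerivAt_id x)).congr_fderiv ?_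
  ext y
  simp only [Nat.cast_ofNat, Nat.reduceAdd, neg_mul, neg_smul, id_eq, add_apply, smul_apply,
    ContinuousLinearMap.id_apply, ContinuousLinearMap.smulRight_apply, neg_apply,
    coe_innerSL_apply, smul_eq_mul, sub_apply]
  module

end InnerProductSpace

theorem laplacian_eq_sum_inner_fderiv {u : E → ℝ} {G : E → E} {G' : E →L[ℝ] E} {x : E}
    (hu : ∀ᶠ y in nhds x, HasGradientAt u (G y) y) (hG : HasFDerivAt G G' x) :
    laplacian u x =
      ∑ i : Fin 3, inner ℝ (G' (EuclideanSpace.single i 1)) (EuclideanSpace.single i 1) := by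
  refine Finset.sum_congr rfl fun i _ => ?_
  have hev : (fun y => fderiv ℝ u y (EuclideanSpace.single i 1))
      =ᶠ[nhds x] fun y => inner ℝ (G y) (EuclideanSpace.single i 1) :=
    hu.mono fun y hy => hy.fderiv_apply
  rw [hev.fderiv_eq, (hG.inner ℝ (hasFDerivAt_const _ x)).fderiv]
  simp

theorem sum_inner_fderiv_inv_norm_cube_smul {x : E} (hx : x ≠ 0) :
    ∑ i : Fin 3, inner ℝ (((‖x‖ ^ 3)⁻¹ • ContinuousLinearMap.id ℝ E
        - (3 * (‖x‖ ^ 5)⁻¹) • (innerSL ℝ x).smulRight x) (EuclideanSpace.single i 1))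
      (EuclideanSpace.single i 1) = 0 := by
  have hn : ‖x‖ ≠ 0 := norm_ne_zero_iff.2 hx
  have hsum : ∑ i : Fin 3, inner ℝ x (EuclideanSpace.single i 1)
      * inner ℝ x (EuclideanSpace.single i 1) = ‖x‖ ^ 2 := by
    simpa [real_inner_comm, real_inner_self_eq_norm_sq] using
      (EuclideanSpace.basisFun (Fin 3) ℝ).sum_inner_mul_inner x x
  simp only [sub_apply, smul_apply, ContinuousLinearMap.id_apply,
    ContinuousLinearMap.smulRight_apply, innerSL_apply_apply, inner_sub_left, real_inner_smul_left,
    EuclideanSpace.inner_single_left, Real.ringHom_apply, PiLp.single_eq_same, mul_one,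
    Finset.sum_sub_distrib, Finset.sum_const, Finset.card_univ, Fintype.card_fin, nsmul_eq_mul,
    Nat.cast_ofNat, ← Finset.mul_sum, hsum]
  field_simp
  ring

theorem isHarmonicOn_const_add_mul_inv_norm (c a : ℝ) :
    IsHarmonicOn (fun y : E => c + a * ‖y‖⁻¹) {0}ᶜ := by
  refine ⟨fun y hy => ?_, fun x hx => ?_⟩
  · exact (contDiffAt_const.add (contDiffAt_const.mul
      ((contDiffAt_norm ℝ hy).inv (norm_ne_zero_iff.2 hy)))).contDiffWithinAt
  · have hgrad : ∀ᶠ y in nhds x, HasGradientAt (fun y : E => c + a * ‖y‖⁻¹)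
        ((-a) • (‖y‖ ^ 3)⁻¹ • y) y :=
      Filter.eventually_of_mem (isOpen_compl_singleton.mem_nhds hx) fun y hy =>
        hasGradientAt_const_add_mul_inv_norm c a hy
    rw [laplacian_eq_sum_inner_fderiv hgrad ((hasFDerivAt_inv_norm_cube_smul hx).const_smul (-a))]
    simp only [smul_apply, real_inner_smul_left, ← Finset.mul_sum,
      sum_inner_fderiv_inv_norm_cube_smul hx, mul_zero]

theorem tendsto_const_add_mul_inv_norm {F : Type*} [NormedAddCommGroup F] (c a : ℝ) :
    Tendsto (fun y : F => c + a * ‖y‖⁻¹) (comap norm atTop) (nhds c) := by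
  have h : Tendsto (fun y : F => ‖y‖⁻¹) (comap norm atTop) (nhds 0) :=
    tendsto_inv_atTop_zero.comp tendsto_comap
  simpa using tendsto_const_nhds.add (h.const_mul a)

theorem single_particle_explicit_solution_general
    (δ α r ubar : ℝ) (hδ : 0 < δ) (hr : 0 < r)
    (ρ v : ℝ) (hρ : ρ = δ ^ α * r)
    (hv : v = (1 / (1 + δ ^ α * r)) * (ubar - 1 / r))
    (u : E → ℝ)
    (hu : ∀ x : E, u x = ubar + (δ ^ α * r / (1 + δ ^ α * r)) * (1 - ubar * r) * δ ^ α / ‖x‖) :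
    -- (i) u is harmonic on ℝ³ \ {0}
    IsHarmonicOn u ({(0 : E)}ᶜ) ∧
    -- (ii) Gibbs–Thomson boundary condition on the sphere of radius ρ
    (∀ x : E, ‖x‖ = ρ → u x = 1 / r + v) ∧
    -- (iii) the outward normal derivative on the sphere of radius ρ equals v
    (∀ x : E, ‖x‖ = ρ → (inner ℝ (gradient u x) (‖x‖⁻¹ • x) : ℝ) = v) ∧
    -- (iv) u(x) → ū as ‖x‖ → ∞
    Tendsto u (Filter.comap norm Filter.atTop) (nhds ubar) := by
  have hs : 0 < δ ^ α := Real.rpow_pos_of_pos hδ α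
  have hρ0 : 0 < ρ := hρ ▸ mul_pos hs hr
  set A := δ ^ α * r / (1 + δ ^ α * r) * (1 - ubar * r) * δ ^ α with hA
  obtain rfl : u = fun y => ubar + A * ‖y‖⁻¹ := funext fun y => by rw [hu, div_eq_mul_inv]
  refine ⟨isHarmonicOn_const_add_mul_inv_norm ubar A, fun x hx => ?_, fun x hx => ?_,
    tendsto_const_add_mul_inv_norm ubar A⟩
  · dsimp only
    rw [hx, hρ, hv, hA]
    field_simp
    ring
  · have hx0 : x ≠ 0 := norm_pos_iff.1 (hx ▸ hρ0)
    rw [(hasGradientAt_const_add_mul_inv_norm ubar A hx0).gradient, real_inner_smul_left,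
      real_inner_smul_left, real_inner_smul_right, real_inner_self_eq_norm_sq, hx, hρ, hv, hA]
    field_simp
    ring

/-- The explicit solution of the single-particle exterior problem in the
reaction-controlled scaling. -/
theorem single_particle_explicit_solution
    (δ α r ubar : ℝ) (hδ : 0 < δ) (hα : 0 < α) (hr : 0 < r)
    (ρ v : ℝ) (hρ : ρ = δ ^ α * r)
    (hv : v = (1 / (1 + δ ^ α * r)) * (ubar - 1 / r))
    (u : E → ℝ)
    (hu : ∀ x : E, u x = ubar + (δ ^ α * r / (1 + δ ^ α * r)) * (1 - ubar * r) * δ ^ α / ‖x‖) :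
    -- (i) u is harmonic on ℝ³ \ {0}
    IsHarmonicOn u ({(0 : E)}ᶜ) ∧
    -- (ii) Gibbs–Thomson boundary condition on the sphere of radius ρ
    (∀ x : E, ‖x‖ = ρ → u x = 1 / r + v) ∧
    -- (iii) the outward normal derivative on the sphere of radius ρ equals v
    (∀ x : E, ‖x‖ = ρ → (inner ℝ (gradient u x) (‖x‖⁻¹ • x) : ℝ) = v) ∧
    -- (iv) u(x) → ū as ‖x‖ → ∞
    Tendsto u (Filter.comap norm Filter.atTop) (nhds ubar) :=
  single_particle_explicit_solution_general δ α r ubar hδ hr ρ v hρ hv u hu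
end

section
/- Let δ ∈ (0,1), α > 0 and V > 0, let I be a nonempty finite index set with card I ≤ δ^{−3}, and let R_i > 0 for i ∈ I satisfy the volume lower bound δ³·Σ_i R_i³ ≥ V. Then the mean field ū := (Σ_i R_i/(1+δ^α R_i)) / (Σ_i R_i²/(1+δ^α R_i)) satisfies ū ≤ V^{−2/3} · (max_i R_i) · (1 + δ^α · max_i R_i). (This is the a priori bound on the mean field obtained from Hölder's inequality and conservation of the total particle volume.) -/
open Finset

/-- The a priori bound on the mean field `ū^δ` obtained from Hölder's inequality and
conservation of the total particle volume: if the (finitely many) particle radii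
`R_i > 0` satisfy the volume lower bound `δ³ Σ R_i³ ≥ V` and there are at most `δ⁻³`
particles, then `ū ≤ V^(−2/3) (sup R_i)(1 + δ^α sup R_i)`. -/
theorem mean_field_a_priori_bound {ι : Type*} (δ α V : ℝ)
    (hδ : δ ∈ Set.Ioo (0 : ℝ) 1) (hα : 0 < α) (hV : 0 < V)
    (I : Finset ι) (hI : I.Nonempty) (hcard : (I.card : ℝ) ≤ δ ^ (-3 : ℝ))
    (R : ι → ℝ) (hR : ∀ i ∈ I, 0 < R i)
    (hvol : V ≤ δ ^ 3 * ∑ i ∈ I, R i ^ 3) :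
    (∑ i ∈ I, R i / (1 + δ ^ α * R i)) / (∑ i ∈ I, R i ^ 2 / (1 + δ ^ α * R i))
      ≤ V ^ (-2 / 3 : ℝ) * (I.sup' hI R) * (1 + δ ^ α * I.sup' hI R) := by
  obtain ⟨hδ0, hδ1⟩ := hδ
  set M := I.sup' hI R with hMdef
  obtain ⟨i₀, hi₀⟩ := hI
  have hM : 0 < M := lt_of_lt_of_le (hR i₀ hi₀) (Finset.le_sup' R hi₀)
  have hRM : ∀ i ∈ I, R i ≤ M := fun i hi => Finset.le_sup' R hi
  have hδα : 0 < δ ^ α := Real.rpow_pos_of_pos hδ0 α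
  set S1 := ∑ i ∈ I, R i with hS1def
  set S2 := ∑ i ∈ I, R i ^ 2 with hS2def
  set S3 := ∑ i ∈ I, R i ^ 3 with hS3def
  have hS1 : 0 < S1 := Finset.sum_pos (fun i hi => hR i hi) ⟨i₀, hi₀⟩
  have hS2 : 0 < S2 := Finset.sum_pos (fun i hi => pow_pos (hR i hi) 2) ⟨i₀, hi₀⟩
  have hS3 : 0 < S3 := Finset.sum_pos (fun i hi => pow_pos (hR i hi) 3) ⟨i₀, hi₀⟩
  have hden : (0:ℝ) < 1 + δ ^ α * M := by positivity
  clear_value M S1 S2 S3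
  -- numerator bound
  have hN : (∑ i ∈ I, R i / (1 + δ ^ α * R i)) ≤ S1 := by
    rw [hS1def]
    apply Finset.sum_le_sum
    intro i hi
    have := hR i hi
    have h1 : (1:ℝ) ≤ 1 + δ ^ α * R i := by nlinarith
    exact div_le_self this.le h1
  -- denominator bound
  have hD : S2 / (1 + δ ^ α * M) ≤ ∑ i ∈ I, R i ^ 2 / (1 + δ ^ α * R i) := by
    rw [hS2def, Finset.sum_div]
    apply Finset.sum_le_sum
    intro i hi
    have hRi := hR i hi
    exact div_le_div_of_nonneg_left (by positivity) (by nlinarith) (by nlinarith [hRM i hi])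
  have hDpos : (0:ℝ) < ∑ i ∈ I, R i ^ 2 / (1 + δ ^ α * R i) :=
    Finset.sum_pos (fun i hi => div_pos (pow_pos (hR i hi) 2) (by nlinarith [hR i hi])) ⟨i₀, hi₀⟩
  -- Hölder: S1 ^ 3 ≤ card ^ 2 * S3
  have hHolder : S1 ^ 3 ≤ (I.card : ℝ) ^ 2 * S3 := by
    have := pow_sum_div_card_le_sum_pow (s := I) (f := R) (fun i hi => (hR i hi).le) 2
    have hc : (0:ℝ) < (I.card : ℝ) ^ 2 := by
      have : (0:ℝ) < I.card := by exact_mod_cast Finset.card_pos.mpr ⟨i₀, hi₀⟩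
      positivity
    rw [← hS1def, ← hS3def] at this
    norm_num at this
    rw [div_le_iff₀ hc] at this
    nlinarith [this]
  -- card bound : card ≤ (δ^3)⁻¹
  have hcard' : (I.card : ℝ) ≤ (δ ^ 3)⁻¹ := by
    have : δ ^ (-3 : ℝ) = (δ ^ 3)⁻¹ := by
      rw [← Real.rpow_natCast δ 3, ← Real.rpow_neg hδ0.le]
      norm_num
    rwa [this] at hcard
  have hcardsq : (δ ^ 3) ^ 2 * (I.card : ℝ) ^ 2 ≤ 1 := by
    have h0 : (0:ℝ) ≤ (I.card : ℝ) := Nat.cast_nonneg _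
    have hd3 : (0:ℝ) < δ ^ 3 := by positivity
    have h1 : (I.card : ℝ) * δ ^ 3 ≤ 1 := by
      rw [← le_div_iff₀ hd3, ← inv_eq_one_div]; exact hcard'
    nlinarith [mul_le_mul h1 h1 (by positivity) zero_le_one]
  -- V² ≤ δ^6 S3²
  have hV2 : V ^ 2 ≤ (δ ^ 3) ^ 2 * S3 ^ 2 := by nlinarith [pow_pos hδ0 3]
  -- key: S1 * V^(2/3) ≤ S3
  have hkey : S1 * V ^ ((2:ℝ) / 3) ≤ S3 := by
    have hVp : (0:ℝ) < V ^ ((2:ℝ)/3) := Real.rpow_pos_of_pos hV _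
    have hcube : (V ^ ((2:ℝ)/3)) ^ 3 = V ^ 2 := by
      rw [← Real.rpow_natCast (V ^ ((2:ℝ)/3)) 3, ← Real.rpow_mul hV.le]
      norm_num
    refine le_of_pow_le_pow_left₀ (n := 3) (by norm_num) hS3.le ?_
    have : (S1 * V ^ ((2:ℝ)/3)) ^ 3 = S1 ^ 3 * V ^ 2 := by
      rw [mul_pow, hcube]
    rw [this]
    have hmul : S1 ^ 3 * V ^ 2 ≤ (I.card : ℝ) ^ 2 * S3 * ((δ ^ 3) ^ 2 * S3 ^ 2) :=
      mul_le_mul hHolder hV2 (sq_nonneg V) (by positivity)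
    have hmul2 : (δ ^ 3) ^ 2 * (I.card : ℝ) ^ 2 * S3 ^ 3 ≤ 1 * S3 ^ 3 :=
      mul_le_mul_of_nonneg_right hcardsq (by positivity)
    have heq : (I.card : ℝ) ^ 2 * S3 * ((δ ^ 3) ^ 2 * S3 ^ 2)
        = (δ ^ 3) ^ 2 * (I.card : ℝ) ^ 2 * S3 ^ 3 := by ring
    linarith [hmul, hmul2]
  have hS1S3 : S1 ≤ V ^ (-2/3 : ℝ) * S3 := by
    have hVp : (0:ℝ) < V ^ ((2:ℝ)/3) := Real.rpow_pos_of_pos hV _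
    have hneg : V ^ (-2/3 : ℝ) = (V ^ ((2:ℝ)/3))⁻¹ := by
      rw [← Real.rpow_neg hV.le]; norm_num
    rw [hneg, ← div_eq_inv_mul, le_div_iff₀ hVp]
    exact hkey
  -- S3 ≤ M * S2
  have hS3S2 : S3 ≤ M * S2 := by
    rw [hS3def, hS2def, Finset.mul_sum]
    apply Finset.sum_le_sum
    intro i hi
    calc R i ^ 3 = R i * R i ^ 2 := by ring
      _ ≤ M * R i ^ 2 := mul_le_mul_of_nonneg_right (hRM i hi) (sq_nonneg (R i))
  -- finish
  rw [div_le_iff₀ hDpos]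
  calc (∑ i ∈ I, R i / (1 + δ ^ α * R i)) ≤ S1 := hN
    _ ≤ V ^ (-2/3 : ℝ) * S3 := hS1S3
    _ ≤ V ^ (-2/3 : ℝ) * (M * S2) := by
        exact mul_le_mul_of_nonneg_left hS3S2 (Real.rpow_pos_of_pos hV _).le
    _ = V ^ (-2/3 : ℝ) * M * (1 + δ ^ α * M) * (S2 / (1 + δ ^ α * M)) := by
        rw [mul_assoc (V ^ (-2/3 : ℝ) * M), mul_comm (1 + δ ^ α * M),
          div_mul_cancel₀ _ hden.ne', mul_assoc]
    _ ≤ V ^ (-2/3 : ℝ) * M * (1 + δ ^ α * M) * (∑ i ∈ I, R i ^ 2 / (1 + δ ^ α * R i)) := by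
        have hpos : (0:ℝ) < V ^ (-2/3 : ℝ) := Real.rpow_pos_of_pos hV _
        apply mul_le_mul_of_nonneg_left hD
        positivity
end

section
/- Let 0 ≤ a < t₁ and let R : (a, t₁) → ℝ be differentiable with R(t) > 0 for all t ∈ (a, t₁) and R(t) → 0 as t → t₁ from the left. If for every t ∈ (a, t₁) the growth rate satisfies −2/R(t) ≤ R′(t) ≤ −1/(2R(t)), then for every t ∈ (a, t₁), √(t₁ − t) ≤ R(t) ≤ 2√(t₁ − t). (This is the sub- /supersolution comparison controlling the radius of a vanishing particle near its extinction time t₁.) -/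
open Set Filter Topology

/-!
With `F = R²` the rate bounds become `-4 ≤ F' ≤ -1`, and `F(t) → 0` as `t → t₁⁻`.
Letting `s → t₁⁻` in the mean value inequalities for `F` on `[t, s]` gives
`t₁ - t ≤ F(t) ≤ 4 (t₁ - t)`; taking square roots gives the claim.
-/

section MeanValueAtEndpoint

variable {f : ℝ → ℝ} {a b c L t : ℝ}

theorem sub_le_mul_sub_of_deriv_le_of_tendsto_nhdsLT (hf : DifferentiableOn ℝ f (Ioo a b))
    (hderiv : ∀ x ∈ Ioo a b, deriv f x ≤ c) (hlim : Tendsto f (𝓝[<] b) (𝓝 L))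
    (ht : t ∈ Ioo a b) : L - f t ≤ c * (b - t) := by
  have hmvt := (convex_Ioo a b).image_sub_le_mul_sub_of_deriv_le hf.continuousOn
    (by rwa [interior_Ioo]) (by rwa [interior_Ioo])
  have hid : Tendsto (fun s => c * (s - t)) (𝓝[<] b) (𝓝 (c * (b - t))) :=
    ((tendsto_id.mono_left nhdsWithin_le_nhds).sub_const t).const_mul c
  refine le_of_tendsto_of_tendsto (hlim.sub_const (f t)) hid ?_
  filter_upwards [Ioo_mem_nhdsLT ht.2] with s hs
  exact hmvt t ht s ⟨ht.1.trans hs.1, hs.2⟩ hs.1.le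

theorem mul_sub_le_sub_of_le_deriv_of_tendsto_nhdsLT (hf : DifferentiableOn ℝ f (Ioo a b))
    (hderiv : ∀ x ∈ Ioo a b, c ≤ deriv f x) (hlim : Tendsto f (𝓝[<] b) (𝓝 L))
    (ht : t ∈ Ioo a b) : c * (b - t) ≤ L - f t := by
  have h := sub_le_mul_sub_of_deriv_le_of_tendsto_nhdsLT (f := -f) (c := -c) hf.neg
    (fun x hx => by simpa only [deriv.neg'] using neg_le_neg (hderiv x hx)) hlim.neg ht
  simp only [Pi.neg_apply] at h
  linarith

end MeanValueAtEndpoint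

theorem deriv_sq_mem_Icc_of_rate_bounds {R : ℝ → ℝ} {t : ℝ} (hR : DifferentiableAt ℝ R t)
    (hpos : 0 < R t) (hrate : -2 / R t ≤ deriv R t ∧ deriv R t ≤ -1 / (2 * R t)) :
    deriv (fun s => R s ^ 2) t ∈ Icc (-4) (-1) := by
  rw [deriv_fun_pow hR]
  obtain ⟨hlow, hup⟩ := hrate
  rw [div_le_iff₀ hpos] at hlow
  rw [le_div_iff₀ (by positivity)] at hup
  constructor <;> push_cast <;> linarith

theorem sqrt_le_and_le_two_mul_sqrt_of_sq_mem_Icc {r x : ℝ} (hr : 0 ≤ r)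
    (h : r ^ 2 ∈ Icc x (4 * x)) : √x ≤ r ∧ r ≤ 2 * √x := by
  have hx : 0 ≤ x := by nlinarith [h.2, sq_nonneg r]
  refine ⟨Real.sqrt_le_iff.mpr ⟨hr, h.1⟩, ?_⟩
  calc r = √(r ^ 2) := (Real.sqrt_sq hr).symm
    _ ≤ √(2 ^ 2 * x) := Real.sqrt_le_sqrt (by linarith [h.2])
    _ = 2 * √x := by rw [Real.sqrt_mul (by norm_num), Real.sqrt_sq (by norm_num)]

theorem vanishing_particle_comparison_general
    (a t₁ : ℝ) (R : ℝ → ℝ)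
    (hdiff : ∀ t ∈ Ioo a t₁, DifferentiableAt ℝ R t)
    (hpos : ∀ t ∈ Ioo a t₁, 0 < R t)
    (hlim : Tendsto R (nhdsWithin t₁ (Iio t₁)) (nhds 0))
    (hrate : ∀ t ∈ Ioo a t₁, -2 / R t ≤ deriv R t ∧ deriv R t ≤ -1 / (2 * R t)) :
    ∀ t ∈ Ioo a t₁, Real.sqrt (t₁ - t) ≤ R t ∧ R t ≤ 2 * Real.sqrt (t₁ - t) := by
  intro t ht
  have hF : DifferentiableOn ℝ (fun s => R s ^ 2) (Ioo a t₁) := fun s hs =>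
    ((hdiff s hs).pow 2).differentiableWithinAt
  have hF' : ∀ s ∈ Ioo a t₁, deriv (fun s => R s ^ 2) s ∈ Icc (-4) (-1) := fun s hs =>
    deriv_sq_mem_Icc_of_rate_bounds (hdiff s hs) (hpos s hs) (hrate s hs)
  have hFlim : Tendsto (fun s => R s ^ 2) (𝓝[<] t₁) (𝓝 0) := by simpa using hlim.pow 2
  have hlow := sub_le_mul_sub_of_deriv_le_of_tendsto_nhdsLT hF (fun s hs => (hF' s hs).2) hFlim ht
  have hup := mul_sub_le_sub_of_le_deriv_of_tendsto_nhdsLT hF (fun s hs => (hF' s hs).1) hFlim ht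
  exact sqrt_le_and_le_two_mul_sqrt_of_sq_mem_Icc (hpos t ht).le ⟨by linarith, by linarith⟩

/-- Sub- and supersolution comparison controlling the radius of a vanishing particle
near its extinction time `t₁`: if on `(a, t₁)` the radius is positive, tends to `0`
as `t → t₁⁻`, and its growth rate satisfies `−2/R ≤ R′ ≤ −1/(2R)`, then
`√(t₁ − t) ≤ R(t) ≤ 2√(t₁ − t)` on `(a, t₁)`. -/
theorem vanishing_particle_comparison
    (a t₁ : ℝ) (ha : 0 ≤ a) (hat : a < t₁) (R : ℝ → ℝ)
    (hdiff : ∀ t ∈ Ioo a t₁, DifferentiableAt ℝ R t)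
    (hpos : ∀ t ∈ Ioo a t₁, 0 < R t)
    (hlim : Tendsto R (nhdsWithin t₁ (Iio t₁)) (nhds 0))
    (hrate : ∀ t ∈ Ioo a t₁, -2 / R t ≤ deriv R t ∧ deriv R t ≤ -1 / (2 * R t)) :
    ∀ t ∈ Ioo a t₁, Real.sqrt (t₁ - t) ≤ R t ∧ R t ≤ 2 * Real.sqrt (t₁ - t) :=
  vanishing_particle_comparison_general a t₁ R hdiff hpos hlim hrate
end

section
/- Let T > 0, 1 ≤ p < 2 and 0 < t₁ ≤ T, and let R : (0, t₁) → ℝ be differentiable with R(t) ≥ √(t₁ − t) and |R′(t)| ≤ 2/R(t) for all t ∈ (0, t₁). Then ∫₀^{t₁} |R′(t)|^p dt ≤ 2^p · t₁^{1−p/2}/(1 − p/2) ≤ 2^p · T^{1−p/2}/(1 − p/2); in particular the growth rate R′ lies in L^p(0, t₁) with a bound depending only on p and T. (This gives the uniform L^p bound, p < 2, on the growth rates of particles used in the compactness argument.) -/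
open Set Filter Real MeasureTheory

/-- Uniform `L^p` bound, `p < 2`, on the growth rate of a particle near its extinction
time `t₁ ≤ T`: if `R(t) ≥ √(t₁ − t)` and `|R′(t)| ≤ 2/R(t)` on `(0, t₁)`, then
`∫₀^{t₁} |R′|^p ≤ 2^p t₁^{1−p/2}/(1 − p/2) ≤ 2^p T^{1−p/2}/(1 − p/2)`; in particular
`R′ ∈ L^p(0, t₁)` with a bound depending only on `p` and `T`. -/
theorem growth_rate_Lp_bound
    (T p : ℝ) (hT : 0 < T) (hp1 : 1 ≤ p) (hp2 : p < 2)
    (t₁ : ℝ) (ht₁ : 0 < t₁) (ht₁T : t₁ ≤ T) (R : ℝ → ℝ)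
    (hdiff : ∀ t ∈ Ioo 0 t₁, DifferentiableAt ℝ R t)
    (hlow : ∀ t ∈ Ioo 0 t₁, Real.sqrt (t₁ - t) ≤ R t)
    (hrate : ∀ t ∈ Ioo 0 t₁, |deriv R t| ≤ 2 / R t) :
    IntegrableOn (fun t => |deriv R t| ^ p) (Ioo 0 t₁) volume ∧
    (∫ t in Ioo 0 t₁, |deriv R t| ^ p) ≤ 2 ^ p * t₁ ^ (1 - p / 2) / (1 - p / 2) ∧
    2 ^ p * t₁ ^ (1 - p / 2) / (1 - p / 2) ≤ 2 ^ p * T ^ (1 - p / 2) / (1 - p / 2) := by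
  have hexp : (0:ℝ) < 1 - p / 2 := by linarith
  have hr : (-1:ℝ) < -(p/2) := by linarith
  set s : ℝ := -(p/2) with hs_def
  set g : ℝ → ℝ := fun t => 2 ^ p * (t₁ - t) ^ s with hg_def
  -- pointwise bound
  have hbound : ∀ t ∈ Ioo 0 t₁, |deriv R t| ^ p ≤ g t := by
    intro t ht
    have h0 : 0 < t₁ - t := by linarith [ht.2]
    have hsq : 0 < Real.sqrt (t₁ - t) := Real.sqrt_pos.2 h0
    have hR : 0 < R t := hsq.trans_le (hlow t ht)
    have h1 : |deriv R t| ≤ 2 / Real.sqrt (t₁ - t) := by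
      refine (hrate t ht).trans ?_
      exact div_le_div_of_nonneg_left (by norm_num) hsq (hlow t ht)
    have h2 : |deriv R t| ^ p ≤ (2 / Real.sqrt (t₁ - t)) ^ p :=
      Real.rpow_le_rpow (abs_nonneg _) h1 (by linarith)
    refine h2.trans_eq ?_
    rw [Real.div_rpow (by norm_num) hsq.le, Real.sqrt_eq_rpow, ← Real.rpow_mul h0.le,
      div_eq_mul_inv, ← Real.rpow_neg h0.le]
    simp only [hg_def, hs_def]
    norm_num
    left; congr 1; ring
  -- integrability of the dominating function
  have hgi : IntegrableOn g (Ioo 0 t₁) volume := by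
    have h1 : IntervalIntegrable (fun x : ℝ => x ^ s) volume 0 t₁ :=
      intervalIntegral.intervalIntegrable_rpow' hr
    have h2 := (h1.comp_sub_left t₁).symm
    simp only [sub_zero, sub_self] at h2
    have h3 : IntervalIntegrable (fun x => (t₁ - x) ^ s) volume 0 t₁ := h2
    have h4 := (h3.const_mul (2 ^ p : ℝ))
    rw [intervalIntegrable_iff_integrableOn_Ioo_of_le ht₁.le] at h4
    exact h4
  -- measurability
  have hmeas : AEStronglyMeasurable (fun t => |deriv R t| ^ p)
      (volume.restrict (Ioo 0 t₁)) :=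
    (((Real.continuous_rpow_const (by linarith : (0:ℝ) ≤ p)).measurable.comp
      (measurable_deriv R).abs).aestronglyMeasurable)
  -- integrability
  have hint : IntegrableOn (fun t => |deriv R t| ^ p) (Ioo 0 t₁) volume := by
    refine hgi.mono' hmeas ?_
    filter_upwards [ae_restrict_mem measurableSet_Ioo] with t ht
    rw [Real.norm_eq_abs, abs_of_nonneg (Real.rpow_nonneg (abs_nonneg _) _)]
    exact hbound t ht
  refine ⟨hint, ?_, ?_⟩
  · -- integral bound
    have hle : (∫ t in Ioo 0 t₁, |deriv R t| ^ p) ≤ ∫ t in Ioo 0 t₁, g t :=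
      setIntegral_mono_on hint hgi measurableSet_Ioo hbound
    refine hle.trans_eq ?_
    have e1 : (∫ t in Ioo 0 t₁, g t) = 2 ^ p * ∫ t in Ioo 0 t₁, (t₁ - t) ^ s := by
      simp only [hg_def]
      exact integral_const_mul _ _
    have e2 : (∫ t in Ioo 0 t₁, (t₁ - t) ^ s) = ∫ t in (0:ℝ)..t₁, (t₁ - t) ^ s := by
      rw [intervalIntegral.integral_of_le ht₁.le, ← integral_Ioc_eq_integral_Ioo]
    have e3 : (∫ t in (0:ℝ)..t₁, (t₁ - t) ^ s) = ∫ x in (0:ℝ)..t₁, x ^ s := by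
      have := intervalIntegral.integral_comp_sub_left (a := (0:ℝ)) (b := t₁)
        (fun x : ℝ => x ^ s) t₁
      simpa using this
    have e4 : (∫ x in (0:ℝ)..t₁, x ^ s) = t₁ ^ (1 - p/2) / (1 - p/2) := by
      rw [integral_rpow (Or.inl hr)]
      have : s + 1 = 1 - p / 2 := by simp [hs_def]; ring
      rw [this, Real.zero_rpow (ne_of_gt hexp)]
      ring
    rw [e1, e2, e3, e4, mul_div_assoc]
  · -- monotone in t₁
    have h2p : (0:ℝ) ≤ 2 ^ p := Real.rpow_nonneg (by norm_num) _
    gcongr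
end
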